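/- For every α ∈ ℂ one has the identity of polynomials S̃_α⁰ x₂ = (α/2)(α − α_{1,2})(α − α_{2,1})(4 x₂ y₂ − 1) in R. -/

import Mathlib

open MvPolynomial

noncomputable section

/-- The polynomial ring `ℂ[(x_n), (y_n)]`: `Sum.inl n ↦ x_n`, `Sum.inr n ↦ y_n`. -/
abbrev FockRing : Type := MvPolynomial (ℕ ⊕ ℕ) ℂ

/-- Heisenberg operators `A_n`. -/
def Aop : ℤ → FockRing → FockRing := fun n p =>
  if 0 < n then (Complex.I / 2) • pderiv (Sum.inl n.toNat) p
  else if n < 0 then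
    (Complex.I / 2) •
      (pderiv (Sum.inr (-n).toNat) p -
        ((2 * (-n) : ℤ) : ℂ) • (X (Sum.inl (-n).toNat) * p))
  else 0

/-- Heisenberg operators `Ã_n`. -/
def Atop : ℤ → FockRing → FockRing := fun n p =>
  if 0 < n then (Complex.I / 2) • pderiv (Sum.inr n.toNat) p
  else if n < 0 then
    (Complex.I / 2) •
      (pderiv (Sum.inl (-n).toNat) p -
        ((2 * (-n) : ℤ) : ℂ) • (X (Sum.inr (-n).toNat) * p))
  else 0

/-- Sugawara operator `L_{-n}^{0,α}` for `n ≥ 1`. -/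
def Lop (γ : ℝ) (α : ℂ) (n : ℕ) (p : FockRing) : FockRing :=
  (Complex.I * (α + ((n : ℂ) - 1) * ((γ : ℂ) / 2 + 2 / (γ : ℂ)))) • Aop (-(n : ℤ)) p +
    ∑ᶠ m ∈ {m : ℤ | m ≠ 0 ∧ m ≠ -(n : ℤ)}, Aop (-(n : ℤ) - m) (Aop m p)

/-- Sugawara operator `L̃_{-n}^{0,α}` for `n ≥ 1`. -/
def Ltop (γ : ℝ) (α : ℂ) (n : ℕ) (p : FockRing) : FockRing :=
  (Complex.I * (α + ((n : ℂ) - 1) * ((γ : ℂ) / 2 + 2 / (γ : ℂ)))) • Atop (-(n : ℤ)) p +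
    ∑ᶠ m ∈ {m : ℤ | m ≠ 0 ∧ m ≠ -(n : ℤ)}, Atop (-(n : ℤ) - m) (Atop m p)

/-- `S_α⁰ = α² L_{-2}^{0,α} + (L_{-1}^{0,α})²`. -/
def Sop (γ : ℝ) (α : ℂ) (p : FockRing) : FockRing :=
  α ^ 2 • Lop γ α 2 p + Lop γ α 1 (Lop γ α 1 p)

/-- `S̃_α⁰ = α² L̃_{-2}^{0,α} + (L̃_{-1}^{0,α})²`. -/
def Stop (γ : ℝ) (α : ℂ) (p : FockRing) : FockRing :=
  α ^ 2 • Ltop γ α 2 p + Ltop γ α 1 (Ltop γ α 1 p)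

end

/-!
For a polynomial in the modes below `N`, only finitely many terms of the Sugawara sum of
`L̃_{-n}` act nontrivially: for `m ≥ N` the annihilator `Ã_m` kills it, and for `m ≤ -(N + n)`
the term `Ã_{-n-m} Ã_m` is `∂_{y_{-n-m}}` applied to `y_{-m} p`, which vanishes since `n ≠ 0`.
After this truncation `S̃_α⁰ x₂` is a finite computation: `L̃_{-1} x₂ = α y₁ x₂`, the `y₁² x₂`
terms of `α² L̃_{-2} x₂` and `L̃_{-1}² x₂` cancel, and the rest factors through
`(α + 2/γ)(α + γ/2) = α² + α Q + 1`.
-/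

open Complex

lemma Atop_of_pos {n : ℤ} (hn : 0 < n) (p : FockRing) :
    Atop n p = (I / 2) • pderiv (Sum.inr n.toNat) p := by
  simp [Atop, hn]

lemma Atop_of_neg {n : ℤ} (hn : n < 0) (p : FockRing) :
    Atop n p = (I / 2) • (pderiv (Sum.inl (-n).toNat) p -
      ((2 * -n : ℤ) : ℂ) • (X (Sum.inr (-n).toNat) * p)) := by
  simp [Atop, hn, hn.not_gt]

lemma Atop_natCast {k : ℕ} (hk : 0 < k) (p : FockRing) :
    Atop k p = (I / 2) • pderiv (Sum.inr k) p := by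
  rw [Atop_of_pos (by omega), Int.toNat_natCast]

lemma Atop_neg_natCast {k : ℕ} (hk : 0 < k) (p : FockRing) :
    Atop (-k) p = (I / 2) • (pderiv (Sum.inl k) p - (2 * k : ℂ) • (X (Sum.inr k) * p)) := by
  rw [Atop_of_neg (by omega), neg_neg, Int.toNat_natCast]
  push_cast
  rfl

lemma Atop_zero_right (n : ℤ) : Atop n 0 = 0 := by
  unfold Atop
  split_ifs <;> simp

theorem finsum_Atop_Atop_eq_sum {n N : ℕ} (hn : 0 < n) {p : FockRing}
    (hx : ∀ k, N ≤ k → pderiv (Sum.inl k) p = 0) (hy : ∀ k, N ≤ k → pderiv (Sum.inr k) p = 0) :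
    ∑ᶠ m ∈ {m : ℤ | m ≠ 0 ∧ m ≠ -(n : ℤ)}, Atop (-(n : ℤ) - m) (Atop m p) =
      ∑ m ∈ Finset.Ioo (-(N + n : ℤ)) N with m ≠ 0 ∧ m ≠ -(n : ℤ),
        Atop (-(n : ℤ) - m) (Atop m p) := by
  refine finsum_mem_eq_sum_of_subset _ ?_ (by intro m; simp)
  rintro m ⟨⟨hm0, hmn⟩, hm⟩
  simp only [Finset.coe_filter, Finset.mem_Ioo, Set.mem_ofPred_eq]
  refine ⟨⟨?_, ?_⟩, hm0, hmn⟩ <;> by_contra! h <;> apply hm <;> show Atop _ (Atop _ p) = 0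
  · obtain ⟨j, rfl⟩ : ∃ j : ℕ, m = -((n + j : ℕ) : ℤ) := ⟨(-m - n).toNat, by omega⟩
    have hj : N ≤ j := by omega
    have hne : (Sum.inr (n + j) : ℕ ⊕ ℕ) ≠ Sum.inr j := by simp; omega
    have hyp : pderiv (Sum.inr j) (X (Sum.inr (n + j)) * p) = 0 := by
      rw [Derivation.leibniz, hy j hj, pderiv_X_of_ne hne, smul_zero, smul_zero, add_zero]
    rw [Atop_neg_natCast (by omega), show -(n : ℤ) - -((n + j : ℕ) : ℤ) = j by push_cast; ring,
      Atop_natCast (by omega), hx _ (le_add_left hj)]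
    simp [hyp]
  · obtain ⟨k, rfl⟩ : ∃ k : ℕ, m = k := ⟨m.toNat, by omega⟩
    rw [Atop_natCast (by omega) p, hy k (by omega), smul_zero, Atop_zero_right]

lemma Ltop_eq_sum (γ : ℝ) (α : ℂ) {n N : ℕ} (hn : 0 < n) {p : FockRing}
    (hx : ∀ k, N ≤ k → pderiv (Sum.inl k) p = 0) (hy : ∀ k, N ≤ k → pderiv (Sum.inr k) p = 0) :
    Ltop γ α n p = (I * (α + ((n : ℂ) - 1) * ((γ : ℂ) / 2 + 2 / (γ : ℂ)))) • Atop (-(n : ℤ)) p +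
      ∑ m ∈ Finset.Ioo (-(N + n : ℤ)) N with m ≠ 0 ∧ m ≠ -(n : ℤ),
        Atop (-(n : ℤ) - m) (Atop m p) := by
  rw [Ltop, finsum_Atop_Atop_eq_sum hn hx hy]

section Computation

variable (γ : ℝ) (α : ℂ)

lemma Ltop_one_X_inl_two :
    Ltop γ α 1 (X (Sum.inl 2)) = α • (X (Sum.inr 1) * X (Sum.inl 2)) := by
  rw [Ltop_eq_sum γ α one_pos (N := 3)
    (by intro k hk; simp [pderiv_X, Pi.single_apply]; omega) (by simp [pderiv_X])]
  push_cast
  rw [show (Finset.Ioo (-4 : ℤ) 3).filter (fun m => m ≠ 0 ∧ m ≠ -1) = {-3, -2, 1, 2} by decide]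
  simp [Atop_of_pos, Atop_of_neg, Finset.sum_insert, pderiv_X]
  match_scalars
  linear_combination (-α) * I_sq

lemma Ltop_one_Ltop_one_X_inl_two :
    Ltop γ α 1 (Ltop γ α 1 (X (Sum.inl 2))) =
      (α ^ 2) • (X (Sum.inr 1) * (X (Sum.inr 1) * X (Sum.inl 2))) +
        (-(α / 2)) • (1 : FockRing) + (2 * α) • (X (Sum.inr 2) * X (Sum.inl 2)) := by
  rw [Ltop_one_X_inl_two, Ltop_eq_sum γ α one_pos (N := 3)
    (by intro k hk; simp [pderiv_X, Pi.single_apply]; omega)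
    (by intro k hk; simp [pderiv_X, Pi.single_apply]; omega)]
  push_cast
  rw [show (Finset.Ioo (-4 : ℤ) 3).filter (fun m => m ≠ 0 ∧ m ≠ -1) = {-3, -2, 1, 2} by decide]
  simp [Atop_of_pos, Atop_of_neg, Finset.sum_insert, pderiv_X]
  match_scalars <;> ring_nf <;> rw [I_sq] <;> ring

lemma Ltop_two_X_inl_two :
    Ltop γ α 2 (X (Sum.inl 2)) =
      (-(α + ((γ : ℂ) / 2 + 2 / (γ : ℂ))) / 2) • (1 : FockRing) +
        (2 * (α + ((γ : ℂ) / 2 + 2 / (γ : ℂ)))) • (X (Sum.inr 2) * X (Sum.inl 2)) +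
        (-1 : ℂ) • (X (Sum.inr 1) * (X (Sum.inr 1) * X (Sum.inl 2))) := by
  rw [Ltop_eq_sum γ α two_pos (N := 3)
    (by intro k hk; simp [pderiv_X, Pi.single_apply]; omega) (by simp [pderiv_X])]
  push_cast
  rw [show (Finset.Ioo (-5 : ℤ) 3).filter (fun m => m ≠ 0 ∧ m ≠ -2) = {-4, -3, -1, 1, 2} by
    decide]
  simp [Atop_of_pos, Atop_of_neg, Finset.sum_insert, pderiv_X]
  match_scalars <;> ring_nf <;> rw [I_sq] <;> ring

end Computation

theorem stmt13_general (γ : ℝ) (hγ0 : 0 < γ) (α : ℂ) :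
    Stop γ α (X (Sum.inl 2)) =
      C (α / 2 * (α - (-2 / (γ : ℂ))) * (α - (-(γ : ℂ) / 2))) *
        (4 * X (Sum.inl 2) * X (Sum.inr 2) - 1) := by
  have hγ : (γ : ℂ) ≠ 0 := ofReal_ne_zero.2 hγ0.ne'
  have hrhs : (4 * X (Sum.inl 2) * X (Sum.inr 2) - 1 : FockRing) =
      (4 : ℂ) • (X (Sum.inr 2) * X (Sum.inl 2)) + (-1 : ℂ) • (1 : FockRing) := by
    simp only [smul_eq_C_mul, map_ofNat, map_neg, map_one]
    ring
  rw [Stop, Ltop_one_Ltop_one_X_inl_two, Ltop_two_X_inl_two, ← smul_eq_C_mul, hrhs]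
  match_scalars <;> field_simp <;> ring

theorem stmt13 (γ : ℝ) (hγ0 : 0 < γ) (hγ2 : γ < 2) (α : ℂ) :
    Stop γ α (X (Sum.inl 2)) =
      C (α / 2 * (α - (-2 / (γ : ℂ))) * (α - (-(γ : ℂ) / 2))) *
        (4 * X (Sum.inl 2) * X (Sum.inr 2) - 1) :=
  stmt13_general γ hγ0 α
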